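/- Every nonzero integer N can be written uniquely as N = ∑ ε_i F_{n_i} where each ε_i ∈ {+1, -1}, the indices n_1 > n_2 > ... are such that any two summands of the same sign differ in index by at least 4, and any two summands of opposite sign differ in index by at least 3. -/

import Mathlib

/-- Fibonacci numbers with the convention `F 1 = 1`, `F 2 = 2`. -/
def F (n : ℕ) : ℕ := Nat.fib (n + 1)

/-- `(P, M)` is a far-difference representation of the integer `N`: the summands
`+F i` for `i ∈ P` and `-F j` for `j ∈ M` have same-sign indices differing by at
least 4 and opposite-sign indices differing by at least 3. -/
def FarRep (P M : Finset ℕ) (N : ℤ) : Prop :=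
  (∀ i ∈ P, 1 ≤ i) ∧ (∀ i ∈ M, 1 ≤ i) ∧
  (∀ i ∈ P, ∀ j ∈ P, i ≠ j → 4 ≤ |(i : ℤ) - (j : ℤ)|) ∧
  (∀ i ∈ M, ∀ j ∈ M, i ≠ j → 4 ≤ |(i : ℤ) - (j : ℤ)|) ∧
  (∀ i ∈ P, ∀ j ∈ M, 3 ≤ |(i : ℤ) - (j : ℤ)|) ∧
  N = ∑ i ∈ P, (F i : ℤ) - ∑ j ∈ M, (F j : ℤ)

/-!
A representation whose largest index `n` carries a plus sign has its value in
`(S (n - 1), S n]`: the other summands add up to something in `[-S (n - 3), S (n - 4)]`, and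
`F n = S (n - 1) + S (n - 3) + 1`, `S n = F n + S (n - 4)`. These intervals partition the
positive integers, so the leading term of a representation of `N > 0` is determined by `N`
(uniqueness), and choosing it greedily leaves a remainder in `[-S (n - 3), S (n - 4)]`, which is
represented with smaller indices (existence). Negation swaps the two signs.
-/

open Set

/-- `S n = F n + F (n - 4) + F (n - 8) + ⋯` (indices `≥ 1`): the largest sum of `F i` over
indices `1 ≤ i ≤ n` pairwise at least 4 apart. -/
def S : ℕ → ℕ
  | 0 => 0
  | n + 1 => F (n + 1) + S (n - 3)

theorem S_zero : S 0 = 0 := by rw [S]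

theorem S_succ (n : ℕ) : S (n + 1) = F (n + 1) + S (n - 3) := by rw [S]

theorem F_add_two (n : ℕ) : F (n + 2) = F n + F (n + 1) := Nat.fib_add_two

theorem F_succ_eq_S_add_S : ∀ n : ℕ, F (n + 1) = S n + S (n - 2) + 1
  | 0 => by simp [S_zero, F]
  | 1 => by simp [S_succ, S_zero, F, Nat.fib_add_two]
  | n + 2 => by
    have ih := F_succ_eq_S_add_S n
    have hS : S (n + 2) = F (n + 2) + S (n - 2) := S_succ (n + 1)
    rw [F_add_two, hS, ih]
    simp only [Nat.add_sub_cancel]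
    ring

theorem S_eq_F_add_S {n : ℕ} (hn : 1 ≤ n) : S n = F n + S (n - 4) := by
  obtain ⟨m, rfl⟩ := Nat.exists_eq_add_of_le' hn
  exact S_succ m

theorem F_eq_S_add_S {n : ℕ} (hn : 1 ≤ n) : F n = S (n - 1) + S (n - 3) + 1 := by
  obtain ⟨m, rfl⟩ := Nat.exists_eq_add_of_le' hn
  exact F_succ_eq_S_add_S m

theorem S_strictMono : StrictMono S :=
  strictMono_nat_of_lt_succ fun n => by
    have := F_succ_eq_S_add_S n
    rw [S_succ]
    omega

theorem mem_Ioc_S_iff {n : ℕ} (hn : 1 ≤ n) {N : ℤ} :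
    N ∈ Ioc (S (n - 1) : ℤ) (S n) ↔ N - F n ∈ Icc (-(S (n - 3) : ℤ)) (S (n - 4)) := by
  have hF := F_eq_S_add_S hn
  have hS := S_eq_F_add_S hn
  simp only [mem_Ioc, mem_Icc]
  omega

theorem eq_of_mem_Ioc_S {m n : ℕ} {N : ℤ} (hm : N ∈ Ioc (S (m - 1) : ℤ) (S m))
    (hn : N ∈ Ioc (S (n - 1) : ℤ) (S n)) : m = n := by
  obtain ⟨hm₁, hm₂⟩ := hm
  obtain ⟨hn₁, hn₂⟩ := hn
  by_contra hne
  rcases Nat.lt_or_gt_of_ne hne with h | h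
  · have := S_strictMono.monotone (Nat.le_sub_one_of_lt h)
    omega
  · have := S_strictMono.monotone (Nat.le_sub_one_of_lt h)
    omega

theorem exists_mem_Ioc_S {N : ℤ} (hN : 0 < N) {n : ℕ} (hn : N ≤ S n) :
    ∃ m ≤ n, 1 ≤ m ∧ N ∈ Ioc (S (m - 1) : ℤ) (S m) := by
  classical
  have hex : ∃ m, N ≤ S m := ⟨n, hn⟩
  have hm : Nat.find hex ≠ 0 := fun h0 => by
    have := Nat.find_spec hex
    rw [h0, S_zero] at this
    omega
  refine ⟨Nat.find hex, Nat.find_min' hex hn, Nat.one_le_iff_ne_zero.mpr hm, ?_, Nat.find_spec hex⟩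
  exact not_le.mp (Nat.find_min hex (by omega))

theorem natAbs_sub_F_lt {n : ℕ} (hn : 1 ≤ n) {N : ℤ} (hN : N ∈ Ioc (S (n - 1) : ℤ) (S n)) :
    (N - F n).natAbs < N.natAbs := by
  obtain ⟨hlo, hhi⟩ := (mem_Ioc_S_iff hn).mp hN
  have h₃ := S_strictMono.monotone (show n - 3 ≤ n - 1 by omega)
  have h₄ := S_strictMono.monotone (show n - 4 ≤ n - 1 by omega)
  have := hN.1
  omega

theorem le_abs_sub_iff {a b k : ℤ} : k ≤ |a - b| ↔ b + k ≤ a ∨ a + k ≤ b := by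
  rw [le_abs]
  omega

theorem sum_F_le_S {P : Finset ℕ} {n : ℕ} (hpos : ∀ i ∈ P, 1 ≤ i)
    (hgap : ∀ i ∈ P, ∀ j ∈ P, i ≠ j → 4 ≤ |(i : ℤ) - j|) (hle : ∀ i ∈ P, i ≤ n) :
    ∑ i ∈ P, F i ≤ S n := by
  induction P using Finset.induction_on_max generalizing n with
  | empty => simp
  | insert a s hlt ih =>
    have ha : a ∈ insert a s := Finset.mem_insert_self a s
    have hs : ∑ i ∈ s, F i ≤ S (a - 4) := by
      refine ih (fun i hi => hpos i (Finset.mem_insert_of_mem hi))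
        (fun i hi j hj => hgap i (Finset.mem_insert_of_mem hi) j (Finset.mem_insert_of_mem hj))
        fun i hi => ?_
      have := le_abs_sub_iff.mp (hgap a ha i (Finset.mem_insert_of_mem hi) (hlt i hi).ne')
      have := hlt i hi
      omega
    calc ∑ i ∈ insert a s, F i = F a + ∑ i ∈ s, F i :=
          Finset.sum_insert fun h => (hlt a h).false
      _ ≤ F a + S (a - 4) := by gcongr
      _ = S a := (S_eq_F_add_S (hpos a ha)).symm
      _ ≤ S n := S_strictMono.monotone (hle a ha)

namespace FarRep

variable {P M Q R : Finset ℕ} {N : ℤ}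

theorem empty : FarRep ∅ ∅ 0 := by
  simp [FarRep]

theorem neg (h : FarRep P M N) : FarRep M P (-N) := by
  obtain ⟨hP, hM, hPP, hMM, hPM, rfl⟩ := h
  exact ⟨hM, hP, hMM, hPP, fun i hi j hj => abs_sub_comm (i : ℤ) j ▸ hPM j hj i hi, by ring⟩

theorem insert (h : FarRep P M N) {n : ℕ} (hn : 1 ≤ n) (hP : ∀ i ∈ P, i + 4 ≤ n)
    (hM : ∀ j ∈ M, j + 3 ≤ n) : FarRep (insert n P) M (N + F n) := by
  obtain ⟨hP₁, hM₁, hPP, hMM, hPM, rfl⟩ := h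
  have hnP : n ∉ P := fun h => by have := hP n h; omega
  refine ⟨?_, hM₁, ?_, hMM, ?_, ?_⟩
  · simpa [hn] using hP₁
  · intro i hi j hj hij
    rw [le_abs_sub_iff]
    rcases Finset.mem_insert.mp hi with rfl | hi <;> rcases Finset.mem_insert.mp hj with hj | hj
    · exact absurd hj.symm hij
    · have := hP j hj; omega
    · have := hP i hi; omega
    · exact le_abs_sub_iff.mp (hPP i hi j hj hij)
  · intro i hi j hj
    rcases Finset.mem_insert.mp hi with rfl | hi
    · have := hM j hj
      rw [le_abs_sub_iff]
      omega
    · exact hPM i hi j hj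
  · rw [Finset.sum_insert hnP]
    ring

theorem erase (h : FarRep P M N) {n : ℕ} (hn : n ∈ P) : FarRep (P.erase n) M (N - F n) := by
  obtain ⟨hP₁, hM₁, hPP, hMM, hPM, rfl⟩ := h
  refine ⟨fun i hi => hP₁ i (Finset.mem_of_mem_erase hi), hM₁,
    fun i hi j hj => hPP i (Finset.mem_of_mem_erase hi) j (Finset.mem_of_mem_erase hj), hMM,
    fun i hi => hPM i (Finset.mem_of_mem_erase hi), ?_⟩
  rw [← Finset.add_sum_erase P _ hn]
  ring

theorem mem_Icc (h : FarRep P M N) {p q : ℕ} (hP : ∀ i ∈ P, i ≤ p) (hM : ∀ j ∈ M, j ≤ q) :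
    N ∈ Icc (-(S q : ℤ)) (S p) := by
  obtain ⟨hP₁, hM₁, hPP, hMM, -, rfl⟩ := h
  have hPS := sum_F_le_S hP₁ hPP hP
  have hMS := sum_F_le_S hM₁ hMM hM
  constructor <;> push_cast [← Nat.cast_sum] <;> omega

theorem mem_Ioc_of_top (h : FarRep P M N) {n : ℕ} (hn : n ∈ P) (htop : ∀ i ∈ P ∪ M, i ≤ n) :
    N ∈ Ioc (S (n - 1) : ℤ) (S n) := by
  rw [mem_Ioc_S_iff (h.1 n hn)]
  refine (h.erase hn).mem_Icc (fun i hi => ?_) (fun j hj => ?_)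
  · have hiP := Finset.mem_of_mem_erase hi
    have := le_abs_sub_iff.mp (h.2.2.1 n hn i hiP (Finset.ne_of_mem_erase hi).symm)
    have := htop i (Finset.mem_union_left M hiP)
    omega
  · have := le_abs_sub_iff.mp (h.2.2.2.2.1 n hn j hj)
    have := htop j (Finset.mem_union_right P hj)
    omega

theorem exists_top_mem_left (h : FarRep P M N) (hN : 0 ≤ N) (hne : (P ∪ M).Nonempty) :
    ∃ n ∈ P, ∀ i ∈ P ∪ M, i ≤ n := by
  have htop : ∀ i ∈ P ∪ M, i ≤ (P ∪ M).max' hne := fun i hi => (P ∪ M).le_max' i hi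
  rcases Finset.mem_union.mp ((P ∪ M).max'_mem hne) with hP | hM
  · exact ⟨_, hP, htop⟩
  · have := (h.neg.mem_Ioc_of_top hM (by rwa [Finset.union_comm])).1
    omega

theorem union_nonempty (h : FarRep P M N) (hN : N ≠ 0) : (P ∪ M).Nonempty := by
  rw [Finset.nonempty_iff_ne_empty, Ne, Finset.union_eq_empty]
  rintro ⟨rfl, rfl⟩
  exact hN (by simpa using h.2.2.2.2.2)

theorem eq_empty_of_zero (h : FarRep P M 0) : P = ∅ ∧ M = ∅ := by
  rw [← Finset.union_eq_empty, ← Finset.not_nonempty_iff_eq_empty]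
  intro hne
  obtain ⟨n, hn, htop⟩ := h.exists_top_mem_left le_rfl hne
  have := (h.mem_Ioc_of_top hn htop).1
  omega

theorem unique_of_pos (hN : 0 < N)
    (ih : ∀ N' : ℤ, N'.natAbs < N.natAbs →
      ∀ {P M Q R : Finset ℕ}, FarRep P M N' → FarRep Q R N' → P = Q ∧ M = R)
    (h : FarRep P M N) (h' : FarRep Q R N) : P = Q ∧ M = R := by
  obtain ⟨n, hn, htop⟩ := h.exists_top_mem_left hN.le (h.union_nonempty hN.ne')
  obtain ⟨n', hn', htop'⟩ := h'.exists_top_mem_left hN.le (h'.union_nonempty hN.ne')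
  have hI := h.mem_Ioc_of_top hn htop
  obtain rfl : n = n' := eq_of_mem_Ioc_S hI (h'.mem_Ioc_of_top hn' htop')
  obtain ⟨hPQ, hMR⟩ := ih _ (natAbs_sub_F_lt (h.1 n hn) hI) (h.erase hn) (h'.erase hn')
  exact ⟨by rw [← Finset.insert_erase hn, hPQ, Finset.insert_erase hn'], hMR⟩

theorem unique (h : FarRep P M N) (h' : FarRep Q R N) : P = Q ∧ M = R := by
  induction hk : N.natAbs using Nat.strong_induction_on generalizing N P M Q R with
  | _ k ih =>
    have ih' : ∀ N' : ℤ, N'.natAbs < N.natAbs →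
        ∀ {P M Q R : Finset ℕ}, FarRep P M N' → FarRep Q R N' → P = Q ∧ M = R :=
      fun N' hN' _ _ _ _ h h' => ih _ (hk ▸ hN') h h' rfl
    rcases lt_trichotomy N 0 with hN | rfl | hN
    · exact (unique_of_pos (neg_pos.mpr hN) (by simpa using ih') h.neg h'.neg).symm
    · obtain ⟨rfl, rfl⟩ := h.eq_empty_of_zero
      obtain ⟨rfl, rfl⟩ := h'.eq_empty_of_zero
      exact ⟨rfl, rfl⟩
    · exact unique_of_pos hN ih' h h'

end FarRep

theorem exists_farRep_of_le_S (n : ℕ) {N : ℤ} (hN : 0 ≤ N) (hNn : N ≤ S n) :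
    ∃ P M, FarRep P M N ∧ (∀ i ∈ P, i ≤ n) ∧ ∀ j ∈ M, j < n := by
  induction n using Nat.strong_induction_on generalizing N with
  | _ n ih =>
    rcases hN.eq_or_lt with rfl | hN
    · exact ⟨∅, ∅, FarRep.empty, by simp, by simp⟩
    obtain ⟨m, hmn, hm, hI⟩ := exists_mem_Ioc_S hN hNn
    obtain ⟨hlo, hhi⟩ := (mem_Ioc_S_iff hm).mp hI
    obtain ⟨P, M, h, hP, hM⟩ : ∃ P M, FarRep P M (N - F m) ∧
        (∀ i ∈ P, i + 4 ≤ m) ∧ ∀ j ∈ M, j + 3 ≤ m := by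
      rcases le_or_gt 0 (N - F m) with hN' | hN'
      · obtain ⟨P, M, h, hP, hM⟩ := ih (m - 4) (by omega) hN' hhi
        refine ⟨P, M, h, fun i hi => ?_, fun j hj => ?_⟩
        · have := h.1 i hi; have := hP i hi; omega
        · have := hM j hj; omega
      · obtain ⟨P, M, h, hP, hM⟩ := ih (m - 3) (by omega) (N := -(N - F m)) (by omega) (by omega)
        refine ⟨M, P, by simpa using h.neg, fun j hj => ?_, fun i hi => ?_⟩
        · have := hM j hj; omega
        · have := h.1 i hi; have := hP i hi; omega
    refine ⟨insert m P, M, by simpa using h.insert hm hP hM, ?_, fun j hj => ?_⟩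
    · intro i hi
      rcases Finset.mem_insert.mp hi with rfl | hi
      · exact hmn
      · have := hP i hi; omega
    · have := hM j hj; omega

theorem exists_farRep (N : ℤ) : ∃ P M, FarRep P M N := by
  rcases le_or_gt 0 N with hN | hN
  · have := S_strictMono.le_apply (x := N.toNat)
    obtain ⟨P, M, h, -⟩ := exists_farRep_of_le_S N.toNat hN (by omega)
    exact ⟨P, M, h⟩
  · have := S_strictMono.le_apply (x := (-N).toNat)
    obtain ⟨P, M, h, -⟩ := exists_farRep_of_le_S (-N).toNat (N := -N) (by omega) (by omega)
    exact ⟨M, P, by simpa using h.neg⟩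

theorem far_difference_representation_general (N : ℤ) :
    ∃! PM : Finset ℕ × Finset ℕ, FarRep PM.1 PM.2 N := by
  obtain ⟨P, M, h⟩ := exists_farRep N
  refine ⟨(P, M), h, fun PM h' => ?_⟩
  obtain ⟨hP, hM⟩ := h'.unique h
  exact Prod.ext hP hM

/-- **Alpert's theorem.** Every nonzero integer has a unique far-difference
representation. -/
theorem far_difference_representation (N : ℤ) (hN : N ≠ 0) :
    ∃! PM : Finset ℕ × Finset ℕ, FarRep PM.1 PM.2 N :=
  far_difference_representation_general N
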